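/- Let β > 1, η > 0, n ≥ 1, and suppose players' beliefs are point masses at posterior means β̂_x = (x + n·Z̄_n)/(n+1) for priors x ∈ [-η, η], where Z̄_n is the mean of n i.i.d. N(β,1) observations. In the coordination game where Strong is δ-strictly rationalizable at the limit with δ^∞ = β - 1, the probability that Strong is rationalizable for all types with common certainty that first-order beliefs have support in {β̂_x : x ∈ [-η,η]} is at least 1 - (1/(β-1))·(√(2/(πn)) + (β+η)/(n+1)). -/

import Mathlib

open MeasureTheory ProbabilityTheory Finset Real Filter Set
open scoped NNReal

/-!
Write `Z̄` for the sample mean, so that `Z̄ ~ N(β, 1/n)`. For `x ≥ -η` the posterior mean deviates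
from `β` by at most `D := |Z̄ - β| + (β + η)/(n + 1)`, hence every posterior mean is at least `1`
as soon as `D < β - 1`. Markov's inequality bounds `P(D ≥ β - 1)` by `𝔼 D / (β - 1)`, and
`𝔼 D = √(2/(πn)) + (β + η)/(n + 1)` because the mean absolute deviation of `N(μ, v)` is `√(2v/π)`.
-/

lemma integral_Ioi_mul_exp_neg_mul_sq {b : ℝ} (hb : 0 < b) :
    ∫ x in Ioi (0 : ℝ), x * rexp (-b * x ^ 2) = (2 * b)⁻¹ := by
  have hderiv (x : ℝ) :
      HasDerivAt (fun y ↦ -(2 * b)⁻¹ * rexp (-b * y ^ 2)) (x * rexp (-b * x ^ 2)) x := by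
    refine (((hasDerivAt_pow 2 x).const_mul (-b)).exp.const_mul (-(2 * b)⁻¹)).congr_deriv ?_
    field_simp
    ring
  have hlim : Tendsto (fun y : ℝ ↦ -(2 * b)⁻¹ * rexp (-b * y ^ 2)) atTop (nhds (-(2 * b)⁻¹ * 0)) :=
    (tendsto_exp_atBot.comp
      ((tendsto_pow_atTop two_ne_zero).const_mul_atTop_of_neg (neg_lt_zero.2 hb))).const_mul _
  rw [integral_Ioi_of_hasDerivAt_of_tendsto' (fun x _ ↦ hderiv x)
    (integrable_mul_exp_neg_mul_sq hb).integrableOn hlim]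
  simp

lemma integral_abs_mul_exp_neg_mul_sq {b : ℝ} (hb : 0 < b) :
    ∫ x : ℝ, |x| * rexp (-b * x ^ 2) = b⁻¹ := by
  have h := integral_comp_abs (f := fun y ↦ y * rexp (-b * y ^ 2))
  simp only [sq_abs] at h
  rw [h, integral_Ioi_mul_exp_neg_mul_sq hb]
  field_simp

lemma integral_abs_sub_gaussianReal (μ : ℝ) (v : ℝ≥0) :
    ∫ x, |x - μ| ∂gaussianReal μ v = √(2 * v / π) := by
  rcases eq_or_ne v 0 with rfl | hv
  · simp
  have hv' : (0 : ℝ) < v := by positivity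
  have hpdf (x : ℝ) : gaussianPDFReal μ v x • |x - μ|
      = (√(2 * π * v))⁻¹ * (|x - μ| * rexp (-(2 * (v : ℝ))⁻¹ * (x - μ) ^ 2)) := by
    rw [gaussianPDFReal, smul_eq_mul]
    field_simp
  simp_rw [integral_gaussianReal_eq_integral_smul hv, hpdf]
  rw [integral_const_mul,
    integral_sub_right_eq_self (fun x ↦ |x| * rexp (-(2 * (v : ℝ))⁻¹ * x ^ 2)),
    integral_abs_mul_exp_neg_mul_sq (by positivity)]
  have hsq : √(2 * π * v) ^ 2 = 2 * π * v := sq_sqrt (by positivity)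
  rw [inv_inv, eq_comm, sqrt_eq_iff_mul_self_eq_of_pos (by positivity)]
  field_simp
  rw [hsq]

lemma map_sum_pi_gaussianReal {ι : Type*} [Fintype ι] (μ : ℝ) (v : ℝ≥0) :
    (Measure.pi fun _ : ι ↦ gaussianReal μ v).map (fun z ↦ ∑ i, z i)
      = gaussianReal (Fintype.card ι * μ) (Fintype.card ι * v) := by
  refine Measure.ext_of_charFun ?_
  ext t
  rw [charFun_map_sum_pi_eq_prod, Finset.prod_apply, charFun_gaussianReal, prod_const,
    charFun_gaussianReal, ← Complex.exp_nat_mul, card_univ]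
  push_cast
  ring_nf

lemma map_mean_pi_gaussianReal {ι : Type*} [Fintype ι] [Nonempty ι] (μ : ℝ) (v : ℝ≥0) :
    (Measure.pi fun _ : ι ↦ gaussianReal μ v).map (fun z ↦ (∑ i, z i) / (Fintype.card ι : ℝ))
      = gaussianReal μ (v / Fintype.card ι) := by
  rw [show (fun z : ι → ℝ ↦ (∑ i, z i) / (Fintype.card ι : ℝ))
      = (· / (Fintype.card ι : ℝ)) ∘ (fun z ↦ ∑ i, z i) from rfl,
    ← Measure.map_map (by fun_prop) (by fun_prop), map_sum_pi_gaussianReal,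
    gaussianReal_map_div_const]
  have : (Fintype.card ι : ℝ) ≠ 0 := by positivity
  congr 1
  · field_simp
  · ext
    push_cast
    field_simp

lemma one_sub_integral_div_le_measureReal_lt {α : Type*} [MeasurableSpace α] {μ : Measure α}
    [IsProbabilityMeasure μ] {f : α → ℝ} (hf_nonneg : 0 ≤ᵐ[μ] f) (hf_int : Integrable f μ)
    {ε : ℝ} (hε : 0 < ε) :
    1 - (∫ x, f x ∂μ) / ε ≤ μ.real {x | f x < ε} := by
  have hmarkov := mul_meas_ge_le_integral_of_nonneg hf_nonneg hf_int ε
  have hcompl : {x | f x < ε} = {x | ε ≤ f x}ᶜ := by ext; simp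
  rw [hcompl,
    probReal_compl_eq_one_sub₀ (nullMeasurableSet_le aemeasurable_const hf_int.1.aemeasurable),
    sub_le_sub_iff_left, le_div_iff₀ hε, mul_comm]
  exact hmarkov

lemma one_le_posterior_mean {n x m β η : ℝ} (hn : 0 ≤ n) (hx : -η ≤ x)
    (h : |m - β| + (β + η) / (n + 1) < β - 1) : 1 ≤ (x + n * m) / (n + 1) := by
  rw [← lt_sub_iff_add_lt', div_lt_iff₀ (by positivity)] at h
  rw [le_div_iff₀ (by positivity)]
  nlinarith [mul_le_mul_of_nonneg_left (neg_abs_le (m - β)) hn, abs_nonneg (m - β)]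

/-- With `n` i.i.d. `N(β,1)` observations, `β > 1`, and point-mass beliefs at the
posterior means `β̂ₓ = (x + n·Z̄ₙ)/(n+1)` for priors `x ∈ [-η,η]`, the probability
that every posterior mean is at least 1 (so that Strong is rationalizable for all
types with common certainty in these beliefs) is at least
`1 - (1/(β-1))·(√(2/(πn)) + (β+η)/(n+1))`. -/
theorem strong_rationalizable_prob_bound (β η : ℝ) (hβ : 1 < β) (hη : 0 < η)
    (n : ℕ) (hn : 1 ≤ n) :
    1 - (1 / (β - 1)) * (Real.sqrt (2 / (Real.pi * n)) + (β + η) / ((n : ℝ) + 1))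
      ≤ ((Measure.pi fun _ : Fin n => gaussianReal β 1)
          {z | ∀ x ∈ Set.Icc (-η) η,
            (1 : ℝ) ≤ (x + (n : ℝ) * ((∑ i, z i) / (n : ℝ))) / ((n : ℝ) + 1)}).toReal := by
  have hn0 : (0 : ℝ) < n := by exact_mod_cast hn
  set c := (β + η) / ((n : ℝ) + 1)
  set ν := gaussianReal β (n : ℝ≥0)⁻¹
  have hlaw :
      (Measure.pi fun _ : Fin n ↦ gaussianReal β 1).map (fun z ↦ (∑ i, z i) / (n : ℝ)) = ν := by
    have : Nonempty (Fin n) := ⟨⟨0, hn⟩⟩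
    simpa using map_mean_pi_gaussianReal (ι := Fin n) β 1
  have hint : Integrable (fun m ↦ |m - β|) ν :=
    (((memLp_id_gaussianReal 1).integrable le_rfl).sub (integrable_const β)).abs
  have hmean : ∫ m, |m - β| + c ∂ν = √(2 / (π * n)) + c := by
    rw [integral_add hint (integrable_const c), integral_abs_sub_gaussianReal, integral_const,
      probReal_univ, one_smul, NNReal.coe_inv, NNReal.coe_natCast, ← div_eq_mul_inv, div_div,
      mul_comm]
  have hc : 0 ≤ c := by positivity
  have hgood : MeasurableSet {m | |m - β| + c < β - 1} :=
    measurableSet_lt (by fun_prop) measurable_const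
  calc 1 - 1 / (β - 1) * (√(2 / (π * n)) + c)
      = 1 - (∫ m, |m - β| + c ∂ν) / (β - 1) := by rw [hmean]; ring
    _ ≤ ν.real {m | |m - β| + c < β - 1} :=
      one_sub_integral_div_le_measureReal_lt (ae_of_all _ fun m ↦ add_nonneg (abs_nonneg _) hc)
        (hint.add (integrable_const c)) (by linarith)
    _ = (Measure.pi fun _ : Fin n ↦ gaussianReal β 1).real
          ((fun z ↦ (∑ i, z i) / (n : ℝ)) ⁻¹' {m | |m - β| + c < β - 1}) := by
      rw [← hlaw, map_measureReal_apply (by fun_prop) hgood]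
    _ ≤ _ := by exact measureReal_mono fun z hz x hx ↦ one_le_posterior_mean hn0.le hx.1 hz
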